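/- Let τ be the F₂-algebra automorphism of MvPolynomial (Fin 2) (ZMod 2) exchanging the two variables u and v, let N = id + τ as an F₂-linear endomorphism, and let W be the range of the F₂-linear map Polynomial (ZMod 2) → MvPolynomial (Fin 2) (ZMod 2) given by R ↦ R(u·v). Then the submodule of τ-invariant (symmetric) polynomials is the internal direct sum of LinearMap.range N and W: every symmetric polynomial p can be written p = Q + τ(Q) + R(u·v) for some polynomials Q and R, and LinearMap.range N ∩ W = 0. (This is the exactness of the beginning of the injective resolution F₂[w₁,w₂] ↪ F₂[u,v] →^{1+τ} F₂[u,v] → … of the invariant ring F₂[u,v]^{Z/2} used in the paper to show ℓ¹(m(B₂)) = 0.) -/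

import Mathlib

open MvPolynomial

/-- The automorphism `τ` of `F₂[u,v]` exchanging the two variables. -/
noncomputable def tauSwap :
    MvPolynomial (Fin 2) (ZMod 2) ≃ₐ[ZMod 2] MvPolynomial (Fin 2) (ZMod 2) :=
  MvPolynomial.renameEquiv (ZMod 2) (Equiv.swap (0 : Fin 2) 1)

/-- The norm map `N = id + τ` as an `F₂`-linear endomorphism. -/
noncomputable def normN :
    MvPolynomial (Fin 2) (ZMod 2) →ₗ[ZMod 2] MvPolynomial (Fin 2) (ZMod 2) :=
  LinearMap.id + tauSwap.toLinearMap

/-- `W`: the image of `F₂[t] → F₂[u,v]`, `R ↦ R(uv)`. -/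
noncomputable def polysInUV :
    Submodule (ZMod 2) (MvPolynomial (Fin 2) (ZMod 2)) :=
  LinearMap.range
    (Polynomial.aeval (X 0 * X 1 : MvPolynomial (Fin 2) (ZMod 2))).toLinearMap

/-!
The swap τ acts on coefficients by exchanging the exponents `(a, b)` and `(b, a)`, and in
characteristic 2 the kernel of `1 + τ` consists of the symmetric polynomials. A symmetric `p` is
`(1 + τ) Q` for `Q` the part of `p` strictly above the diagonal `a = b`, plus its diagonal part,
which is a polynomial in `uv`. Conversely the coefficients of `(1 + τ) Q` on the diagonal are
`c + c = 0`, while polynomials in `uv` live on the diagonal, so the two summands meet in `0`.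
-/

namespace MvPolynomial

variable {R σ τ : Type*} [CommSemiring R]

theorem coeff_rename_equiv (e : σ ≃ τ) (p : MvPolynomial σ R) (d : τ →₀ ℕ) :
    coeff d (rename e p) = coeff (d.equivMapDomain e.symm) p := by
  have hd : (d.equivMapDomain e.symm).mapDomain e = d := by
    rw [← Finsupp.equivMapDomain_eq_mapDomain, ← Finsupp.equivMapDomain_trans,
      Equiv.symm_trans_self, Finsupp.equivMapDomain_refl]
  rw [← coeff_rename_mapDomain e e.injective, hd]

noncomputable def filter (P : (σ →₀ ℕ) → Prop) [DecidablePred P] (p : MvPolynomial σ R) :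
    MvPolynomial σ R :=
  AddMonoidAlgebra.ofCoeff ((AddMonoidAlgebra.coeff p).filter P)

theorem coeff_filter (P : (σ →₀ ℕ) → Prop) [DecidablePred P] (p : MvPolynomial σ R)
    (d : σ →₀ ℕ) : coeff d (p.filter P) = if P d then coeff d p else 0 :=
  rfl

theorem aeval_X_zero_mul_X_one_monomial (n : ℕ) (c : R) :
    Polynomial.aeval (X 0 * X 1 : MvPolynomial (Fin 2) R) (Polynomial.monomial n c) =
      monomial (Finsupp.single 0 n + Finsupp.single 1 n) c := by
  rw [Polynomial.aeval_monomial, mul_pow, X_pow_eq_monomial, X_pow_eq_monomial, monomial_mul,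
    algebraMap_eq, C_mul_monomial, one_mul, mul_one]

theorem mem_range_aeval_X_zero_mul_X_one_iff {p : MvPolynomial (Fin 2) R} :
    p ∈ LinearMap.range (Polynomial.aeval (R := R) (X 0 * X 1)).toLinearMap ↔
      ∀ d : Fin 2 →₀ ℕ, d 0 ≠ d 1 → coeff d p = 0 := by
  constructor
  · rintro ⟨f, rfl⟩ d hd
    induction f using Polynomial.induction_on' with
    | add f g hf hg => rw [map_add, coeff_add, hf, hg, add_zero]
    | monomial n c =>
      rw [AlgHom.toLinearMap_apply, aeval_X_zero_mul_X_one_monomial, coeff_monomial, if_neg]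
      rintro rfl
      simp at hd
  · intro hp
    rw [p.as_sum]
    refine Submodule.sum_mem _ fun d hd => ⟨Polynomial.monomial (d 0) (coeff d p), ?_⟩
    have hdiag : d 0 = d 1 := by_contra fun h => mem_support_iff.1 hd (hp d h)
    rw [AlgHom.toLinearMap_apply, aeval_X_zero_mul_X_one_monomial]
    congr
    ext i
    fin_cases i <;> simp [hdiag]

end MvPolynomial

theorem coeff_tauSwap (p : MvPolynomial (Fin 2) (ZMod 2)) (d : Fin 2 →₀ ℕ) :
    coeff d (tauSwap p) = coeff (d.equivMapDomain (Equiv.swap 0 1)) p := by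
  rw [tauSwap, renameEquiv_apply, coeff_rename_equiv, Equiv.symm_swap]

theorem tauSwap_tauSwap (p : MvPolynomial (Fin 2) (ZMod 2)) : tauSwap (tauSwap p) = p := by
  rw [tauSwap, renameEquiv_apply, renameEquiv_apply, rename_rename, ← Equiv.coe_trans,
    Equiv.swap_swap, Equiv.coe_refl, rename_id_apply]

theorem tauSwap_X_zero_mul_X_one : tauSwap (X 0 * X 1) = X 0 * X 1 := by
  simp [tauSwap, mul_comm]

theorem normN_apply (p : MvPolynomial (Fin 2) (ZMod 2)) : normN p = p + tauSwap p :=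
  rfl

theorem mem_ker_normN_iff {p : MvPolynomial (Fin 2) (ZMod 2)} :
    p ∈ LinearMap.ker normN ↔ tauSwap p = p := by
  rw [LinearMap.mem_ker, normN_apply, CharTwo.add_eq_zero, eq_comm]

theorem normN_normN (p : MvPolynomial (Fin 2) (ZMod 2)) : normN (normN p) = 0 := by
  rw [normN_apply, normN_apply, map_add, tauSwap_tauSwap, add_comm (tauSwap p) p,
    CharTwo.add_self_eq_zero]

theorem range_normN_le_ker_normN : LinearMap.range normN ≤ LinearMap.ker normN :=
  LinearMap.range_le_ker_iff.2 (LinearMap.ext normN_normN)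

theorem polysInUV_le_ker_normN : polysInUV ≤ LinearMap.ker normN := by
  rintro _ ⟨f, rfl⟩
  rw [mem_ker_normN_iff, AlgHom.toLinearMap_apply, ← AlgEquiv.coe_toAlgHom,
    ← Polynomial.aeval_algHom_apply, AlgEquiv.coe_toAlgHom, tauSwap_X_zero_mul_X_one]

theorem coeff_normN_of_eq {d : Fin 2 →₀ ℕ} (hd : d 0 = d 1) (p : MvPolynomial (Fin 2) (ZMod 2)) :
    coeff d (normN p) = 0 := by
  have hswap : d.equivMapDomain (Equiv.swap 0 1) = d := by
    ext i
    fin_cases i <;> simp [hd]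
  rw [normN_apply, coeff_add, coeff_tauSwap, hswap, CharTwo.add_self_eq_zero]

theorem eq_normN_filter_add_filter_of_tauSwap_eq {p : MvPolynomial (Fin 2) (ZMod 2)}
    (hp : tauSwap p = p) :
    p = normN (p.filter fun d => d 0 < d 1) + p.filter fun d => d 0 = d 1 := by
  ext d
  have hswap : coeff (d.equivMapDomain (Equiv.swap 0 1)) p = coeff d p := by
    rw [← coeff_tauSwap, hp]
  rw [coeff_add, normN_apply, coeff_add, coeff_tauSwap, coeff_filter, coeff_filter, coeff_filter,
    hswap]
  simp only [Finsupp.equivMapDomain_apply, Equiv.symm_swap, Equiv.swap_apply_left,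
    Equiv.swap_apply_right]
  rcases lt_trichotomy (d 0) (d 1) with h | h | h
  · simp [h, h.ne, h.not_gt]
  · simp [h]
  · simp [h, h.ne', h.not_gt]

theorem symmetric_polynomials_direct_sum :
    LinearMap.ker normN = LinearMap.range normN ⊔ polysInUV ∧
      LinearMap.range normN ⊓ polysInUV = ⊥ := by
  refine ⟨le_antisymm ?_ (sup_le range_normN_le_ker_normN polysInUV_le_ker_normN), ?_⟩
  · intro p hp
    rw [eq_normN_filter_add_filter_of_tauSwap_eq (mem_ker_normN_iff.1 hp)]
    refine Submodule.add_mem_sup (LinearMap.mem_range_self _ _) ?_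
    exact mem_range_aeval_X_zero_mul_X_one_iff.2 fun d hd => by rw [coeff_filter, if_neg hd]
  · rw [Submodule.eq_bot_iff]
    rintro _ ⟨⟨q, rfl⟩, hW⟩
    ext d
    by_cases hd : d 0 = d 1
    · exact coeff_normN_of_eq hd q
    · exact mem_range_aeval_X_zero_mul_X_one_iff.1 hW d hd
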